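/- Let m < −5/2, let a₁, a₂, a₃ ∈ S^m(ℝ) and a(η) = a₁(η₁)a₂(η₂)a₃(η₃), and let b : ℝ³ → ℂ be measurable with ‖b‖ < ∞. Fix 0 < α < β and 0 < δ < min(1, α). For ξ ∈ ℝ and κ₂, κ₃ ∈ [α,β] set Z(ξ,κ₂,κ₃) = {η ∈ ℝ³ : |η₁| < (1−δ)|ξ|, |η₂| < (κ₂−δ)|ξ|, |η₃| < (κ₃−δ)|ξ|}. Then there exists C > 0 such that for all ξ with |ξ| > 1 and all κ₂, κ₃ ∈ [α, β]: | ∫_{Z(ξ,κ₂,κ₃) ∩ A_{GGG}(ξ,κ₂,κ₃)} ( a(ξθ−η) − a(ξθ) ) b(η) dη | ≤ C |ξ|^{3m−1}. -/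

import Mathlib

/-!
On `Zset δ ξ κ₂ κ₃` the segment from `κᵢξ` to `κᵢξ - ηᵢ` stays at distance at least `δ|ξ|` from
the origin, so the symbol estimates give `|aᵢ| ≲ (δ|ξ|)^m` at both ends and, by the mean value
theorem, `|aᵢ(κᵢξ - ηᵢ) - aᵢ(κᵢξ)| ≲ (δ|ξ|)^(m-1) |ηᵢ|`. Telescoping the product gives
`|a(ξθ - η) - a(ξθ)| ≲ |ξ|^(3m-1) (|η₁| + |η₂| + |η₃|)`, and `(|η₁| + |η₂| + |η₃|) |b(η)|` is
integrable by Cauchy–Schwarz against the weight of `‖b‖`: the complementary factor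
`(|η₁| + |η₂| + |η₃|)² ∏ ⟨ηᵢ⟩^(2m+1) ≲ ∏ ⟨ηᵢ⟩^(2m+3)` is integrable since `m < -2`.
-/

open MeasureTheory

/-- The Japanese bracket `⟨t⟩ = (1+t²)^{1/2}`. -/
noncomputable def jb (t : ℝ) : ℝ := Real.sqrt (1 + t ^ 2)

/-- The symbol class `S^m(ℝ)`. -/
def SymbolClass (m : ℝ) (a : ℝ → ℂ) : Prop :=
  ContDiff ℝ (⊤ : ℕ∞) a ∧
    ∀ k : ℕ, ∃ C : ℝ, 0 < C ∧ ∀ t : ℝ, ‖iteratedDeriv k a t‖ ≤ C * jb t ^ (m - (k : ℝ))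

/-- `a(η) = a₁(η₁)a₂(η₂)a₃(η₃)`. -/
noncomputable def aprod (a₁ a₂ a₃ : ℝ → ℂ) (η : Fin 3 → ℝ) : ℂ :=
  a₁ (η 0) * a₂ (η 1) * a₃ (η 2)

/-- `ξθ = (ξ, κ₂ξ, κ₃ξ)`. -/
def xitheta (ξ κ₂ κ₃ : ℝ) : Fin 3 → ℝ := ![ξ, κ₂ * ξ, κ₃ * ξ]

/-- `A_{GGG}(ξ,κ₂,κ₃) = {η : |η₁−ξ| ≥ δ|ξ|, |η₂−κ₂ξ| ≥ δ|ξ|, |η₃−κ₃ξ| ≥ δ|ξ|}`. -/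
def A_GGG (δ ξ κ₂ κ₃ : ℝ) : Set (Fin 3 → ℝ) :=
  {η | δ * |ξ| ≤ |η 0 - ξ| ∧ δ * |ξ| ≤ |η 1 - κ₂ * ξ| ∧ δ * |ξ| ≤ |η 2 - κ₃ * ξ|}

/-- `‖b‖² = ∫ ⟨η₁⟩^{−2m−1}⟨η₂⟩^{−2m−1}⟨η₃⟩^{−2m−1}|b(η)|² dη` as an `ℝ≥0∞`-valued integral. -/
noncomputable def bNormSq (m : ℝ) (b : (Fin 3 → ℝ) → ℂ) : ENNReal :=
  ∫⁻ η : Fin 3 → ℝ, ENNReal.ofReal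
    (jb (η 0) ^ (-2 * m - 1) * jb (η 1) ^ (-2 * m - 1) * jb (η 2) ^ (-2 * m - 1) * ‖b η‖ ^ 2)

/-- `Z(ξ,κ₂,κ₃) = {η : |η₁| < (1−δ)|ξ|, |η₂| < (κ₂−δ)|ξ|, |η₃| < (κ₃−δ)|ξ|}`. -/
def Zset (δ ξ κ₂ κ₃ : ℝ) : Set (Fin 3 → ℝ) :=
  {η | |η 0| < (1 - δ) * |ξ| ∧ |η 1| < (κ₂ - δ) * |ξ| ∧ |η 2| < (κ₃ - δ) * |ξ|}

open Set

lemma jb_pos (t : ℝ) : 0 < jb t := Real.sqrt_pos.mpr (by positivity)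

lemma one_le_jb (t : ℝ) : 1 ≤ jb t :=
  Real.one_le_sqrt.mpr (by nlinarith [sq_nonneg t])

lemma abs_le_jb (t : ℝ) : |t| ≤ jb t := by
  rw [jb, ← Real.sqrt_sq_eq_abs]
  exact Real.sqrt_le_sqrt (by linarith)

lemma continuous_jb : Continuous jb := by
  unfold jb; fun_prop

lemma jb_rpow_eq (t p : ℝ) : jb t ^ p = (1 + t ^ 2) ^ (p / 2) := by
  rw [jb, Real.sqrt_eq_rpow, ← Real.rpow_mul (by positivity)]
  ring_nf

lemma integrable_jb_rpow {p : ℝ} (hp : p < -1) : Integrable fun t : ℝ => jb t ^ p := by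
  have hdim : (Module.finrank ℝ ℝ : ℝ) < -p := by
    rw [Module.finrank_self]; push_cast; linarith
  simpa [jb_rpow_eq] using integrable_rpow_neg_one_add_norm_sq (E := ℝ) (μ := volume) hdim

section Weights

variable {ι : Type*} [Fintype ι]

lemma continuous_prod_jb_rpow (q : ℝ) : Continuous fun η : ι → ℝ => ∏ i, jb (η i) ^ q :=
  continuous_finsetProd _ fun i _ =>
    (continuous_jb.comp (continuous_apply i)).rpow_const fun _ => Or.inl (jb_pos _).ne'

lemma prod_jb_rpow_pos (η : ι → ℝ) (q : ℝ) : 0 < ∏ i, jb (η i) ^ q :=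
  Finset.prod_pos fun _ _ => Real.rpow_pos_of_pos (jb_pos _) _

lemma prod_jb_rpow_sq (η : ι → ℝ) (q : ℝ) :
    (∏ i, jb (η i) ^ q) ^ 2 = ∏ i, jb (η i) ^ (2 * q) := by
  rw [← Finset.prod_pow]
  congr 1 with i
  rw [← Real.rpow_natCast, ← Real.rpow_mul (jb_pos _).le, mul_comm]
  norm_num

lemma memLp_two_prod_jb_rpow {q : ℝ} (hq : q < -1 / 2) :
    MemLp (fun η : ι → ℝ => ∏ i, jb (η i) ^ q) 2 := by
  rw [memLp_two_iff_integrable_sq (continuous_prod_jb_rpow q).aestronglyMeasurable]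
  simp_rw [prod_jb_rpow_sq, volume_pi]
  exact Integrable.fintype_prod fun _ => integrable_jb_rpow (by linarith)

end Weights

lemma abs_add_abs_add_abs_le_prod_jb (η : Fin 3 → ℝ) :
    |η 0| + |η 1| + |η 2| ≤ 3 * ∏ i, jb (η i) := by
  rw [Fin.prod_univ_three]
  have h₀ := one_le_jb (η 0)
  have h₁ := one_le_jb (η 1)
  have h₂ := one_le_jb (η 2)
  have h₁₂ : 1 ≤ jb (η 1) * jb (η 2) := one_le_mul_of_one_le_of_one_le h₁ h₂
  nlinarith [abs_le_jb (η 0), abs_le_jb (η 1), abs_le_jb (η 2), mul_le_mul_of_nonneg_left h₁₂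
    (zero_le_one.trans h₀), mul_le_mul_of_nonneg_right h₀ (zero_le_one.trans h₁₂),
    mul_le_mul_of_nonneg_right h₀ (zero_le_one.trans h₁)]

lemma SymbolClass.exists_norm_iteratedDeriv_le {m : ℝ} {a : ℝ → ℂ} (ha : SymbolClass m a)
    (k : ℕ) (hk : m ≤ k) :
    ∃ C, 0 < C ∧ ∀ s, 0 < s → ∀ t, s ≤ |t| → ‖iteratedDeriv k a t‖ ≤ C * s ^ (m - k) := by
  obtain ⟨C, hC, hbound⟩ := ha.2 k
  refine ⟨C, hC, fun s hs t ht => (hbound t).trans (mul_le_mul_of_nonneg_left ?_ hC.le)⟩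
  exact Real.rpow_le_rpow_of_nonpos hs (ht.trans (abs_le_jb t)) (sub_nonpos.mpr hk)

lemma SymbolClass.exists_norm_le_of_segment {m : ℝ} (hm : m ≤ 0) {a : ℝ → ℂ}
    (ha : SymbolClass m a) :
    ∃ C, 0 < C ∧ ∀ s, 0 < s → ∀ x y, (∀ t ∈ uIcc x y, s ≤ |t|) →
      ‖a x‖ ≤ C * s ^ m ∧ ‖a x - a y‖ ≤ C * s ^ (m - 1) * |x - y| := by
  obtain ⟨C₀, hC₀, h₀⟩ := ha.exists_norm_iteratedDeriv_le 0 (by simpa using hm)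
  obtain ⟨C₁, hC₁, h₁⟩ := ha.exists_norm_iteratedDeriv_le 1 (by push_cast; linarith)
  refine ⟨max C₀ C₁, lt_max_of_lt_left hC₀, fun s hs x y hxy => ⟨?_, ?_⟩⟩
  · have := h₀ s hs x (hxy x left_mem_uIcc)
    simp only [iteratedDeriv_zero, CharP.cast_eq_zero, sub_zero] at this
    exact this.trans (by gcongr; exact le_max_left _ _)
  · have hderiv : ∀ t ∈ uIcc x y, ‖deriv a t‖ ≤ max C₀ C₁ * s ^ (m - 1) := fun t ht => by
      have := h₁ s hs t (hxy t ht)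
      simp only [iteratedDeriv_one, Nat.cast_one] at this
      exact this.trans (by gcongr; exact le_max_right _ _)
    have hdiff := ha.1.differentiable (by simp)
    simpa [← Real.norm_eq_abs] using Convex.norm_image_sub_le_of_norm_hasDerivWithin_le
      (fun t _ => (hdiff t).hasDerivAt.hasDerivWithinAt) hderiv (convex_uIcc x y)
      right_mem_uIcc left_mem_uIcc

lemma le_abs_of_mem_uIcc_mul_sub {δ κ ξ h t : ℝ} (hh : |h| < (κ - δ) * |ξ|)
    (ht : t ∈ uIcc (κ * ξ) (κ * ξ - h)) : δ * |ξ| ≤ |t| := by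
  have hdist : |t - κ * ξ| ≤ |h| := by simpa using abs_sub_left_of_mem_uIcc ht
  have hκ : κ * |ξ| ≤ |κ * ξ| := by
    rw [abs_mul]; gcongr; exact le_abs_self κ
  linarith [abs_sub_abs_le_abs_sub (κ * ξ) t, abs_sub_comm (κ * ξ) t]

lemma norm_mul_mul_sub_mul_mul_le {R : Type*} [SeminormedRing R] (x₁ x₂ x₃ y₁ y₂ y₃ : R) :
    ‖x₁ * x₂ * x₃ - y₁ * y₂ * y₃‖ ≤
      ‖x₁ - y₁‖ * ‖x₂‖ * ‖x₃‖ + ‖y₁‖ * ‖x₂ - y₂‖ * ‖x₃‖ + ‖y₁‖ * ‖y₂‖ * ‖x₃ - y₃‖ := by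
  have htele : x₁ * x₂ * x₃ - y₁ * y₂ * y₃ =
      (x₁ - y₁) * x₂ * x₃ + y₁ * (x₂ - y₂) * x₃ + y₁ * y₂ * (x₃ - y₃) := by noncomm_ring
  rw [htele]
  exact norm_add₃_le.trans (add_le_add_three norm_mul₃_le norm_mul₃_le norm_mul₃_le)

lemma exists_norm_aprod_sub_le {m : ℝ} (hm : m ≤ 0) {a₁ a₂ a₃ : ℝ → ℂ}
    (h₁ : SymbolClass m a₁) (h₂ : SymbolClass m a₂) (h₃ : SymbolClass m a₃) :
    ∃ K, 0 < K ∧ ∀ δ ξ κ₂ κ₃ : ℝ, 0 < δ → ∀ η ∈ Zset δ ξ κ₂ κ₃,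
      ‖aprod a₁ a₂ a₃ (xitheta ξ κ₂ κ₃ - η) - aprod a₁ a₂ a₃ (xitheta ξ κ₂ κ₃)‖ ≤
        K * (δ * |ξ|) ^ (3 * m - 1) * (|η 0| + |η 1| + |η 2|) := by
  obtain ⟨C₁, hC₁, hb₁⟩ := h₁.exists_norm_le_of_segment hm
  obtain ⟨C₂, hC₂, hb₂⟩ := h₂.exists_norm_le_of_segment hm
  obtain ⟨C₃, hC₃, hb₃⟩ := h₃.exists_norm_le_of_segment hm
  refine ⟨C₁ * C₂ * C₃, by positivity, fun δ ξ κ₂ κ₃ hδ η ⟨hη₀, hη₁, hη₂⟩ => ?_⟩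
  have hξ : 0 < |ξ| := by nlinarith [abs_nonneg (η 0), abs_nonneg ξ]
  have hs : 0 < δ * |ξ| := mul_pos hδ hξ
  set s := δ * |ξ|
  have bounds : ∀ {a : ℝ → ℂ} {C κ h : ℝ},
      (∀ s, 0 < s → ∀ x y, (∀ t ∈ uIcc x y, s ≤ |t|) →
        ‖a x‖ ≤ C * s ^ m ∧ ‖a x - a y‖ ≤ C * s ^ (m - 1) * |x - y|) →
      |h| < (κ - δ) * |ξ| →
      ‖a (κ * ξ - h)‖ ≤ C * s ^ m ∧ ‖a (κ * ξ)‖ ≤ C * s ^ m ∧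
        ‖a (κ * ξ - h) - a (κ * ξ)‖ ≤ C * s ^ (m - 1) * |h| := by
    intro a C κ h hb hh
    have hseg : ∀ t ∈ uIcc (κ * ξ) (κ * ξ - h), s ≤ |t| :=
      fun t ht => le_abs_of_mem_uIcc_mul_sub hh ht
    obtain ⟨hx, hxy⟩ := hb s hs _ _ (uIcc_comm (κ * ξ) _ ▸ hseg)
    exact ⟨hx, (hb s hs _ _ hseg).1, by simpa using hxy⟩
  obtain ⟨-, hy₁, hd₁⟩ : ‖a₁ (ξ - η 0)‖ ≤ C₁ * s ^ m ∧ ‖a₁ ξ‖ ≤ C₁ * s ^ m ∧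
      ‖a₁ (ξ - η 0) - a₁ ξ‖ ≤ C₁ * s ^ (m - 1) * |η 0| := by
    simpa using bounds hb₁ (κ := 1) hη₀
  obtain ⟨hx₂, hy₂, hd₂⟩ := bounds hb₂ hη₁
  obtain ⟨hx₃, -, hd₃⟩ := bounds hb₃ hη₂
  have hpow : s ^ (3 * m - 1) = s ^ (m - 1) * s ^ m * s ^ m := by
    rw [← Real.rpow_add hs, ← Real.rpow_add hs]; ring_nf
  simp only [aprod, xitheta, Pi.sub_apply, Matrix.cons_val_zero, Matrix.cons_val_one,
    Matrix.cons_val_two, Matrix.head_cons, Matrix.tail_cons]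
  calc _ ≤ _ := norm_mul_mul_sub_mul_mul_le _ _ _ _ _ _
    _ ≤ C₁ * s ^ (m - 1) * |η 0| * (C₂ * s ^ m) * (C₃ * s ^ m) +
          C₁ * s ^ m * (C₂ * s ^ (m - 1) * |η 1|) * (C₃ * s ^ m) +
          C₁ * s ^ m * (C₂ * s ^ m) * (C₃ * s ^ (m - 1) * |η 2|) := by gcongr
    _ = _ := by rw [hpow]; ring

lemma integrable_abs_add_abs_add_abs_mul_norm {m : ℝ} (hm : m < -2) {b : (Fin 3 → ℝ) → ℂ}
    (hb : AEStronglyMeasurable b) (hbnorm : bNormSq m b < ⊤) :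
    Integrable fun η : Fin 3 → ℝ => (|η 0| + |η 1| + |η 2|) * ‖b η‖ := by
  obtain ⟨p, hp⟩ : ∃ p, p = m + 1 / 2 := ⟨_, rfl⟩
  have hF : MemLp (fun η : Fin 3 → ℝ => (|η 0| + |η 1| + |η 2|) * ∏ i, jb (η i) ^ p) 2 := by
    refine ((memLp_two_prod_jb_rpow (q := p + 1) (by rw [hp]; linarith)).const_mul 3).mono
      (((by fun_prop : Continuous fun η : Fin 3 → ℝ => |η 0| + |η 1| + |η 2|).mul
        (continuous_prod_jb_rpow p)).aestronglyMeasurable) (ae_of_all _ fun η => ?_)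
    have hprod : ∏ i, jb (η i) ^ (p + 1) = (∏ i, jb (η i)) * ∏ i, jb (η i) ^ p := by
      simp_rw [← Finset.prod_mul_distrib, Real.rpow_add_one (jb_pos _).ne', mul_comm]
    have hpos := prod_jb_rpow_pos η p
    have hpos' := prod_jb_rpow_pos η (p + 1)
    rw [Real.norm_of_nonneg (by positivity), Real.norm_of_nonneg (by positivity), hprod,
      ← mul_assoc]
    gcongr
    exact abs_add_abs_add_abs_le_prod_jb η
  have hG : MemLp (fun η => (∏ i, jb (η i) ^ (-p)) * ‖b η‖) 2 := by
    have hmeas : AEStronglyMeasurable fun η => (∏ i, jb (η i) ^ (-p)) * ‖b η‖ :=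
      (continuous_prod_jb_rpow _).aestronglyMeasurable.mul hb.norm
    rw [memLp_two_iff_integrable_sq hmeas]
    refine ⟨hmeas.pow 2, (hasFiniteIntegral_iff_ofReal (ae_of_all _ fun η => by positivity)).mpr ?_⟩
    refine lt_of_eq_of_lt (lintegral_congr fun η => ?_) hbnorm
    rw [mul_pow, prod_jb_rpow_sq, Fin.prod_univ_three, hp]
    ring_nf
  convert hF.integrable_mul hG using 1
  ext η
  have hcancel : (∏ i, jb (η i) ^ p) * ∏ i, jb (η i) ^ (-p) = 1 := by
    simp [← Finset.prod_mul_distrib, ← Real.rpow_add (jb_pos _)]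
  simp only [Pi.mul_apply]
  linear_combination (-(|η 0| + |η 1| + |η 2|) * ‖b η‖) * hcancel

lemma measurableSet_Zset (δ ξ κ₂ κ₃ : ℝ) : MeasurableSet (Zset δ ξ κ₂ κ₃) := by
  simp only [Zset, ofPred_and]
  exact (measurableSet_lt (by fun_prop) measurable_const).inter
    ((measurableSet_lt (by fun_prop) measurable_const).inter
      (measurableSet_lt (by fun_prop) measurable_const))

theorem stmt9_general (m : ℝ) (hm : m < -5 / 2) (a₁ a₂ a₃ : ℝ → ℂ)
    (h₁ : SymbolClass m a₁) (h₂ : SymbolClass m a₂) (h₃ : SymbolClass m a₃)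
    (b : (Fin 3 → ℝ) → ℂ) (hb : Measurable b) (hbnorm : bNormSq m b < ⊤)
    (α β δ : ℝ) (hδ : 0 < δ) :
    ∃ C : ℝ, 0 < C ∧
      ∀ ξ : ℝ, 1 < |ξ| → ∀ κ₂ ∈ Set.Icc α β, ∀ κ₃ ∈ Set.Icc α β,
        ‖∫ η in Zset δ ξ κ₂ κ₃ ∩ A_GGG δ ξ κ₂ κ₃,
            (aprod a₁ a₂ a₃ (xitheta ξ κ₂ κ₃ - η) - aprod a₁ a₂ a₃ (xitheta ξ κ₂ κ₃)) * b η‖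
          ≤ C * |ξ| ^ (3 * m - 1) := by
  obtain ⟨K, hK, hpointwise⟩ := exists_norm_aprod_sub_le (by linarith) h₁ h₂ h₃
  set g := fun η : Fin 3 → ℝ => (|η 0| + |η 1| + |η 2|) * ‖b η‖
  have hg : Integrable g :=
    integrable_abs_add_abs_add_abs_mul_norm (by linarith) hb.aestronglyMeasurable hbnorm
  have hI : 0 ≤ ∫ η, g η := integral_nonneg fun η => by positivity
  refine ⟨K * δ ^ (3 * m - 1) * (∫ η, g η) + 1, by positivity, ?_⟩
  intro ξ hξ κ₂ _ κ₃ _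
  have hbound : ∀ᵐ η ∂volume.restrict (Zset δ ξ κ₂ κ₃ ∩ A_GGG δ ξ κ₂ κ₃),
      ‖(aprod a₁ a₂ a₃ (xitheta ξ κ₂ κ₃ - η) - aprod a₁ a₂ a₃ (xitheta ξ κ₂ κ₃)) * b η‖ ≤
        K * (δ * |ξ|) ^ (3 * m - 1) * g η := by
    refine ae_restrict_of_ae_restrict_of_subset inter_subset_left
      (ae_restrict_of_forall_mem (measurableSet_Zset δ ξ κ₂ κ₃) fun η hη => ?_)
    rw [norm_mul, ← mul_assoc]
    exact mul_le_mul_of_nonneg_right (hpointwise δ ξ κ₂ κ₃ hδ η hη) (norm_nonneg _)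
  calc _ ≤ ∫ η in Zset δ ξ κ₂ κ₃ ∩ A_GGG δ ξ κ₂ κ₃, K * (δ * |ξ|) ^ (3 * m - 1) * g η :=
        norm_integral_le_of_norm_le (hg.const_mul _).integrableOn hbound
    _ ≤ ∫ η, K * (δ * |ξ|) ^ (3 * m - 1) * g η :=
        setIntegral_le_integral (hg.const_mul _) (ae_of_all _ fun η => by positivity)
    _ = K * δ ^ (3 * m - 1) * (∫ η, g η) * |ξ| ^ (3 * m - 1) := by
        rw [integral_const_mul, Real.mul_rpow hδ.le (abs_nonneg ξ)]; ring
    _ ≤ (K * δ ^ (3 * m - 1) * (∫ η, g η) + 1) * |ξ| ^ (3 * m - 1) := by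
        gcongr
        exact le_add_of_nonneg_right zero_le_one

theorem stmt9 (m : ℝ) (hm : m < -5 / 2) (a₁ a₂ a₃ : ℝ → ℂ)
    (h₁ : SymbolClass m a₁) (h₂ : SymbolClass m a₂) (h₃ : SymbolClass m a₃)
    (b : (Fin 3 → ℝ) → ℂ) (hb : Measurable b) (hbnorm : bNormSq m b < ⊤)
    (α β δ : ℝ) (hα : 0 < α) (hαβ : α < β) (hδ : 0 < δ) (hδ1 : δ < min 1 α) :
    ∃ C : ℝ, 0 < C ∧
      ∀ ξ : ℝ, 1 < |ξ| → ∀ κ₂ ∈ Set.Icc α β, ∀ κ₃ ∈ Set.Icc α β,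
        ‖∫ η in Zset δ ξ κ₂ κ₃ ∩ A_GGG δ ξ κ₂ κ₃,
            (aprod a₁ a₂ a₃ (xitheta ξ κ₂ κ₃ - η) - aprod a₁ a₂ a₃ (xitheta ξ κ₂ κ₃)) * b η‖
          ≤ C * |ξ| ^ (3 * m - 1) :=
  stmt9_general m hm a₁ a₂ a₃ h₁ h₂ h₃ b hb hbnorm α β δ hδ
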